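/- For any double star S(p,q) with 1 ≤ p ≤ q and order n = p + q + 2, the strong Roman domination number satisfies γ_{StR}(S(p,q)) < 6n/7. -/

import Mathlib

namespace SimpleGraph

variable {V : Type*}

/-- The degree of a vertex (cardinality of its open neighborhood). -/
noncomputable def deg (G : SimpleGraph V) (v : V) : ℕ := (G.neighborSet v).ncard

/-- Maximum degree. -/
noncomputable def maxDeg [Fintype V] (G : SimpleGraph V) : ℕ :=
  Finset.univ.sup fun v => G.deg v

/-- A strong Roman dominating function: `f : V → {0,1,...,⌈Δ/2⌉+1}` such that every vertex
with value 0 has a neighbor `w` with `f w ≥ 2` and `f w ≥ 1 + ⌈|N(w) ∩ B₀|/2⌉`. -/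
def IsStRDF [Fintype V] (G : SimpleGraph V) (f : V → ℕ) : Prop :=
  (∀ v, f v ≤ (G.maxDeg + 1) / 2 + 1) ∧
  ∀ v, f v = 0 → ∃ w, G.Adj v w ∧ 2 ≤ f w ∧
    1 + ((G.neighborSet w ∩ {u | f u = 0}).ncard + 1) / 2 ≤ f w

/-- The strong Roman domination number. -/
noncomputable def gammaStR [Fintype V] (G : SimpleGraph V) : ℕ :=
  sInf {k | ∃ f, G.IsStRDF f ∧ ∑ v, f v = k}

/-- A Roman dominating function. -/
def IsRDF (G : SimpleGraph V) (f : V → ℕ) : Prop :=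
  (∀ v, f v ≤ 2) ∧ ∀ v, f v = 0 → ∃ w, G.Adj v w ∧ f w = 2

/-- The Roman domination number. -/
noncomputable def gammaR [Fintype V] (G : SimpleGraph V) : ℕ :=
  sInf {k | ∃ f, G.IsRDF f ∧ ∑ v, f v = k}

/-- A dominating set. -/
def IsDomSet (G : SimpleGraph V) (D : Set V) : Prop :=
  ∀ v ∉ D, ∃ w ∈ D, G.Adj v w

/-- The domination number. -/
noncomputable def gammaDom [Fintype V] (G : SimpleGraph V) : ℕ :=
  sInf {k | ∃ D : Set V, G.IsDomSet D ∧ D.ncard = k}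

end SimpleGraph

/-!
Give a vertex `v` of degree `d` the weight `1 + ⌈d/2⌉`, its neighbours the weight `0` and every
other vertex the weight `1`. This is a strong Roman dominating function: the zeros are exactly
the neighbours of `v`, and `v` carries enough weight to defend all of them. Its weight is
`n - ⌊d/2⌋`, so `γ_{StR}(G) ≤ n - ⌊Δ/2⌋` for every graph of order `n`. In `S(p,q)` the centre `v`
has degree `q + 1 ≥ n/2`, which makes `n - ⌊(q+1)/2⌋` smaller than `6n/7`.
-/

namespace SimpleGraph

variable {V : Type*} (G : SimpleGraph V)

open Classical in
noncomputable def starStRDF (v : V) (w : V) : ℕ :=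
  if w = v then 1 + (G.deg v + 1) / 2 else if G.Adj v w then 0 else 1

lemma starStRDF_self (v : V) : G.starStRDF v v = 1 + (G.deg v + 1) / 2 := if_pos rfl

lemma starStRDF_eq_zero_iff {v w : V} : G.starStRDF v w = 0 ↔ G.Adj v w := by
  unfold starStRDF
  split_ifs with hwv hvw <;> simp_all

variable [Fintype V]

lemma deg_le_maxDeg (v : V) : G.deg v ≤ G.maxDeg :=
  Finset.le_sup (Finset.mem_univ v)

lemma deg_eq_degree [DecidableRel G.Adj] (v : V) : G.deg v = G.degree v := by
  rw [deg, Set.ncard_eq_toFinset_card', ← card_neighborFinset_eq_degree, neighborFinset]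

lemma gammaStR_le_of_isStRDF {f : V → ℕ} (hf : G.IsStRDF f) : G.gammaStR ≤ ∑ w, f w :=
  Nat.sInf_le ⟨f, hf, rfl⟩

lemma isStRDF_starStRDF (v : V) : G.IsStRDF (G.starStRDF v) := by
  refine ⟨fun w => ?_, fun w hw => ?_⟩
  · have hdeg := G.deg_le_maxDeg v
    unfold starStRDF
    split_ifs
    · have := Nat.div_le_div_right (c := 2) (Nat.succ_le_succ hdeg)
      omega
    all_goals omega
  · have hvw : G.Adj v w := G.starStRDF_eq_zero_iff.mp hw
    have hfv := G.starStRDF_self v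
    have hzeros_le : (G.neighborSet v ∩ {t | G.starStRDF v t = 0}).ncard ≤ G.deg v :=
      Set.ncard_le_ncard Set.inter_subset_left (Set.toFinite _)
    have hzeros_pos : 0 < (G.neighborSet v ∩ {t | G.starStRDF v t = 0}).ncard :=
      Set.ncard_pos (Set.toFinite _) |>.mpr ⟨w, hvw, hw⟩
    exact ⟨v, hvw.symm, by omega, by omega⟩

lemma sum_starStRDF_add_deg_div_two (v : V) :
    ∑ w, G.starStRDF v w + G.deg v / 2 = Fintype.card V := by
  classical
  have hrest : ∑ w ∈ Finset.univ.erase v, G.starStRDF v w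
      = ((Finset.univ.erase v).filter (fun w => ¬ G.Adj v w)).card := by
    rw [Finset.card_filter]
    refine Finset.sum_congr rfl fun w hw => ?_
    simp only [starStRDF, if_neg (Finset.ne_of_mem_erase hw)]
    split_ifs <;> rfl
  have hnbrs : ((Finset.univ.erase v).filter (G.Adj v)).card = G.deg v := by
    rw [Finset.filter_erase, Finset.erase_eq_of_notMem (by simp), ← neighborFinset_eq_filter,
      card_neighborFinset_eq_degree, deg_eq_degree]
  have hsplit := Finset.card_filter_add_card_filter_not (s := Finset.univ.erase v) (G.Adj v)
  rw [← Finset.add_sum_erase _ _ (Finset.mem_univ v), hrest]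
  rw [Finset.card_erase_of_mem (Finset.mem_univ v), Finset.card_univ, hnbrs] at hsplit
  have hfv := G.starStRDF_self v
  have hcard : 0 < Fintype.card V := Fintype.card_pos_iff.mpr ⟨v⟩
  omega

theorem gammaStR_add_deg_div_two_le_card (v : V) : G.gammaStR + G.deg v / 2 ≤ Fintype.card V := by
  have := G.gammaStR_le_of_isStRDF (G.isStRDF_starStRDF v)
  have := G.sum_starStRDF_add_deg_div_two v
  omega

end SimpleGraph

theorem stmt9_general {V : Type*} [Fintype V] (G : SimpleGraph V) (p q : ℕ)
    (hp : 1 ≤ p) (hpq : p ≤ q)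
    (v : V)
    (hv : G.deg v = q + 1)
    (hn : Fintype.card V = p + q + 2) :
    (G.gammaStR : ℚ) < 6 * (p + q + 2) / 7 := by
  have hbound := G.gammaStR_add_deg_div_two_le_card v
  rw [hv, hn] at hbound
  rw [lt_div_iff₀ (by norm_num)]
  exact_mod_cast (by omega : G.gammaStR * 7 < 6 * (p + q + 2))

/-- For any double star `S(p,q)` with `1 ≤ p ≤ q` and order `n = p + q + 2`,
`γ_{StR}(S(p,q)) < 6n/7`. A double star is a tree with exactly two adjacent non-leaf
vertices `u` and `v`, where `u` has `p` leaf neighbors and `v` has `q` leaf neighbors. -/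
theorem stmt9 {V : Type*} [Fintype V] (G : SimpleGraph V) (p q : ℕ)
    (hp : 1 ≤ p) (hpq : p ≤ q) (htree : G.IsTree)
    (u v : V) (huv : G.Adj u v)
    (hu : G.deg u = p + 1) (hv : G.deg v = q + 1)
    (hleaf : ∀ w, w ≠ u → w ≠ v → G.deg w = 1)
    (hn : Fintype.card V = p + q + 2) :
    (G.gammaStR : ℚ) < 6 * (p + q + 2) / 7 :=
  stmt9_general G p q hp hpq v hv hn
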